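/- The set of α ∈ (1, 3/2) for which there exists no n ≥ 1 with D^{n-1}(1/α) ∈ (1/(2α), 1 − 1/(2α)) has Lebesgue measure zero, where D is the doubling map. -/

import Mathlib

/-!
Modulo 1 the map `D` is the ergodic map `y ↦ 2 • y` of the circle, so almost every orbit
enters any fixed interval `(q, 1 - q)`; taking the countably many rational `q < 1/2` handles
every `α` at once, since `1/(2α) < q` for some such `q`. Finally `α ↦ 1/α` is smooth away
from `0` and hence maps null sets to null sets.
-/

/-- The doubling map `D(x) = 2x (mod 1)`. -/
noncomputable def D (x : ℝ) : ℝ := Int.fract (2*x)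

open MeasureTheory Set

theorem Ergodic.ae_exists_iterate_mem {X : Type*} [MeasurableSpace X] {μ : Measure X}
    [IsFiniteMeasure μ] {f : X → X} {s : Set X} (hf : Ergodic f μ) (hs : MeasurableSet s)
    (hμs : μ s ≠ 0) : ∀ᵐ x ∂μ, ∃ n, f^[n] x ∈ s := by
  set U := ⋃ n, f^[n] ⁻¹' s
  have hU : MeasurableSet U := .iUnion fun n => hf.measurable.iterate n hs
  have hfU : f ⁻¹' U ⊆ U := by
    rintro x ⟨_, ⟨n, rfl⟩, hn⟩
    exact mem_iUnion.2 ⟨n + 1, by rwa [mem_preimage, Function.iterate_succ_apply]⟩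
  rcases hf.ae_empty_or_univ_of_preimage_ae_le hU.nullMeasurableSet hfU.eventuallyLE with h | h
  · exact absurd (measure_mono_null (subset_iUnion (fun n => f^[n] ⁻¹' s) 0) (ae_eq_empty.1 h))
      hμs
  · filter_upwards [mem_ae_iff.2 (ae_eq_univ.1 h)] with x hx
    simpa [U] using hx

theorem semiconj_coe_D :
    Function.Semiconj ((↑) : ℝ → AddCircle (1 : ℝ)) D fun y => (2 : ℕ) • y := fun x => by
  simp only [D, AddCircle.coe_fract, ← AddCircle.coe_nsmul, nsmul_eq_mul, Nat.cast_ofNat]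

theorem mapsTo_D : MapsTo D (Ico (0 : ℝ) 1) (Ico 0 1) :=
  fun x _ => ⟨Int.fract_nonneg (2 * x), Int.fract_lt_one (2 * x)⟩

theorem ae_exists_iterate_D_mem_Ioo {a b : ℝ} (ha : 0 ≤ a) (hab : a < b) (hb : b ≤ 1) :
    ∀ᵐ x ∂volume.restrict (Ico 0 1), ∃ n, D^[n] x ∈ Ioo a b := by
  set B : Set (AddCircle (1 : ℝ)) := (↑) '' Ioo a b
  have hB : IsOpen B := QuotientAddGroup.isOpenMap_coe _ isOpen_Ioo
  have hμB : volume B ≠ 0 := (hB.measure_pos _ ((nonempty_Ioo.2 hab).image _)).ne'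
  have hcircle := (AddCircle.ergodic_nsmul (T := 1) one_lt_two).ae_exists_iterate_mem
    hB.measurableSet hμB
  have hline := (AddCircle.measurePreserving_mk 1 0).quasiMeasurePreserving.ae hcircle
  rw [zero_add, ← Measure.restrict_congr_set Ico_ae_eq_Ioc] at hline
  filter_upwards [hline, ae_restrict_mem measurableSet_Ico] with x ⟨n, w, hw, hwx⟩ hx
  have hDx : D^[n] x ∈ Ico (0 : ℝ) (0 + 1) := by rw [zero_add]; exact mapsTo_D.iterate n hx
  have hw' : w ∈ Ico (0 : ℝ) (0 + 1) := ⟨ha.trans hw.1.le, by linarith [hw.2]⟩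
  rw [← (semiconj_coe_D.iterate_right n) x, AddCircle.coe_eq_coe_iff_of_mem_Ico hw' hDx] at hwx
  exact ⟨n, hwx ▸ hw⟩

theorem Real.volume_preimage_inv_eq_zero {s : Set ℝ} (hs : volume s = 0) :
    volume (Inv.inv ⁻¹' s) = 0 := by
  have hdiff : DifferentiableOn ℝ Inv.inv (s \ {0}) := fun x hx =>
    (differentiableAt_inv hx.2).differentiableWithinAt
  have himage : volume (Inv.inv '' (s \ {0})) = 0 :=
    addHaar_image_eq_zero_of_differentiableOn_of_addHaar_eq_zero _ hdiff
      (measure_mono_null sdiff_subset hs)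
  refine measure_mono_null (fun x hx => ?_)
    (measure_union_null himage (Real.volume_singleton (a := 0)))
  rcases eq_or_ne x 0 with rfl | hx0
  · exact Or.inr rfl
  · exact Or.inl ⟨x⁻¹, ⟨hx, inv_ne_zero hx0⟩, inv_inv x⟩

theorem Real.ae_comp_inv {p : ℝ → Prop} (h : ∀ᵐ x, p x) : ∀ᵐ x, p x⁻¹ :=
  ae_iff.2 (Real.volume_preimage_inv_eq_zero (ae_iff.1 h))

theorem stmt10 :
    MeasureTheory.volume {α ∈ Set.Ioo (1:ℝ) (3/2) |
      ¬ ∃ n : ℕ, 1 ≤ n ∧ D^[n-1] (1/α) ∈ Set.Ioo (1/(2*α)) (1 - 1/(2*α))} = 0 := by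
  have hall : ∀ᵐ x, ∀ q : ℚ, 0 < (q : ℝ) → (q : ℝ) < 1 / 2 → x ∈ Ico (0 : ℝ) 1 →
      ∃ n, D^[n] x ∈ Ioo (q : ℝ) (1 - q) := by
    refine ae_all_iff.2 fun q => ?_
    simp only [Filter.eventually_imp_distrib_left]
    intro hq0 hq
    exact (ae_restrict_iff' measurableSet_Ico).1
      (ae_exists_iterate_D_mem_Ioo hq0.le (by linarith) (by linarith))
  refine measure_eq_zero_iff_ae_notMem.2 ((Real.ae_comp_inv hall).mono ?_)
  rintro α hα ⟨⟨h1α, hα32⟩, hnot⟩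
  have hα0 : 0 < α := by linarith
  obtain ⟨q, hαq, hq⟩ := exists_rat_btwn (show 1 / (2 * α) < 1 / 2 by
    rw [div_lt_div_iff₀ (by linarith) two_pos]; linarith)
  obtain ⟨n, hn⟩ := hα q ((by positivity : (0 : ℝ) < 1 / (2 * α)).trans hαq) hq
    ⟨inv_nonneg.2 hα0.le, inv_lt_one_of_one_lt₀ h1α⟩
  rw [← one_div] at hn
  exact hnot ⟨n + 1, by omega, by
    rw [Nat.add_sub_cancel]; exact ⟨by linarith [hn.1], by linarith [hn.2]⟩⟩
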